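/- arXiv:1005.3572 — 2 statements merged into one kernel-verified Lean document; each statement's English description precedes it below -/
import Mathlib

section
/- Let n ≥ 3, c = ±1, κ ≠ 0 with κ² + 4c ≠ 0. Set p = -(1/κ²)(κ²+4c)[κ² + 2c(3n+1)], q = (4/κ⁴)(κ²+4c)[c(n+1)κ⁴ + (3n²+6n-1)κ² + 8c(n²-1)], r = -(4(n-1)(n+3)/κ⁴)(κ²+4c)²[κ² + 2c(n+1)]. Then the cubic t³ + pt² + qt + r factors as (t - λ_u)(t - λ_v)(t - λ_w) where λ_u = 2c(n-1)(κ²+4c)/κ² and λ_{v,w} = [(κ²+4c)(κ² + 4c(n+1)) ± √((κ²+4c)(κ⁶ - 12cκ⁴ + 64c(n+1)²))]/(2κ²), provided the discriminant expression (κ²+4c)(κ⁶ - 12cκ⁴ + 64c(n+1)²) is nonnegative. -/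
/-- Lemma 7: factorization of the cubic t³ + pt² + qt + r for class-B
hypersurfaces of 3-type. -/
theorem classB_cubic_factorization (n : ℕ) (hn : 3 ≤ n) (c κ : ℝ)
    (hc : c = 1 ∨ c = -1) (hκ : κ ≠ 0) (hκ4 : κ ^ 2 + 4 * c ≠ 0)
    (hdisc : 0 ≤ (κ ^ 2 + 4 * c) *
      (κ ^ 6 - 12 * c * κ ^ 4 + 64 * c * ((n : ℝ) + 1) ^ 2)) :
    let p : ℝ := -(1 / κ ^ 2) * (κ ^ 2 + 4 * c) * (κ ^ 2 + 2 * c * (3 * (n : ℝ) + 1))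
    let q : ℝ := (4 / κ ^ 4) * (κ ^ 2 + 4 * c) *
      (c * ((n : ℝ) + 1) * κ ^ 4 + (3 * (n : ℝ) ^ 2 + 6 * (n : ℝ) - 1) * κ ^ 2
        + 8 * c * ((n : ℝ) ^ 2 - 1))
    let r : ℝ := -(4 * ((n : ℝ) - 1) * ((n : ℝ) + 3) / κ ^ 4) * (κ ^ 2 + 4 * c) ^ 2 *
      (κ ^ 2 + 2 * c * ((n : ℝ) + 1))
    let lu : ℝ := 2 * c * ((n : ℝ) - 1) * (κ ^ 2 + 4 * c) / κ ^ 2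
    let lv : ℝ := ((κ ^ 2 + 4 * c) * (κ ^ 2 + 4 * c * ((n : ℝ) + 1)) +
      Real.sqrt ((κ ^ 2 + 4 * c) *
        (κ ^ 6 - 12 * c * κ ^ 4 + 64 * c * ((n : ℝ) + 1) ^ 2))) / (2 * κ ^ 2)
    let lw : ℝ := ((κ ^ 2 + 4 * c) * (κ ^ 2 + 4 * c * ((n : ℝ) + 1)) -
      Real.sqrt ((κ ^ 2 + 4 * c) *
        (κ ^ 6 - 12 * c * κ ^ 4 + 64 * c * ((n : ℝ) + 1) ^ 2))) / (2 * κ ^ 2)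
    ∀ t : ℝ, t ^ 3 + p * t ^ 2 + q * t + r = (t - lu) * (t - lv) * (t - lw) := by
  intro p q r lu lv lw t
  have hs := Real.mul_self_sqrt hdisc
  have hvw : (t - lv) * (t - lw) =
      t ^ 2 - (κ ^ 2 + 4 * c) * (κ ^ 2 + 4 * c * ((n : ℝ) + 1)) / κ ^ 2 * t +
        ((κ ^ 2 + 4 * c) ^ 2 * (κ ^ 2 + 4 * c * ((n : ℝ) + 1)) ^ 2 -
          (κ ^ 2 + 4 * c) * (κ ^ 6 - 12 * c * κ ^ 4 + 64 * c * ((n : ℝ) + 1) ^ 2)) /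
          (4 * κ ^ 4) := by
    simp only [lv, lw]
    linear_combination (-1 / (4 * κ ^ 4)) * hs
  rw [mul_assoc (t - lu), hvw]
  simp only [p, q, r, lu]
  field_simp
  rcases hc with rfl | rfl <;> ring
end

section
/- Let n ≥ 3 be odd, c = 1, κ² = 4m where n = 2m - 1. Then the cubic t³ + pt² + qt + r (with p, q, r as in the 3-type class-B formulas with c = 1) factors as [t² - (4(m+1)(2m-1)/m)t + 16(m-1)(m+1)²/m]·[t - 8(m+1)]. -/
/-!
Substituting `κ² = 4m` and `n = 2m - 1` makes `p`, `q`, `r` rational functions of `m` alone, and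
by Vieta it suffices to match them with the elementary symmetric functions of the three roots:
those of the quadratic factor, and `8(m + 1)`.
-/

theorem cubic_eq_quadratic_mul_linear {R : Type*} [CommRing R] {p q r s P u : R}
    (hp : p = -(s + u)) (hq : q = P + s * u) (hr : r = -(P * u)) (t : R) :
    t ^ 3 + p * t ^ 2 + q * t + r = (t ^ 2 - s * t + P) * (t - u) := by
  subst hp hq hr
  ring

/-- Specialization of the class-B cubic at κ² = 4m, c = 1, n = 2m - 1. -/
theorem classB_cubic_at_4m (m : ℕ) (hm : 2 ≤ m) (κ : ℝ)
    (hκ2 : κ ^ 2 = 4 * (m : ℝ)) :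
    let n : ℝ := 2 * (m : ℝ) - 1
    let p : ℝ := -(1 / κ ^ 2) * (κ ^ 2 + 4) * (κ ^ 2 + 2 * (3 * n + 1))
    let q : ℝ := (4 / κ ^ 4) * (κ ^ 2 + 4) *
      ((n + 1) * κ ^ 4 + (3 * n ^ 2 + 6 * n - 1) * κ ^ 2 + 8 * (n ^ 2 - 1))
    let r : ℝ := -(4 * (n - 1) * (n + 3) / κ ^ 4) * (κ ^ 2 + 4) ^ 2 *
      (κ ^ 2 + 2 * (n + 1))
    ∀ t : ℝ, t ^ 3 + p * t ^ 2 + q * t + r =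
      (t ^ 2 - (4 * ((m : ℝ) + 1) * (2 * (m : ℝ) - 1) / (m : ℝ)) * t +
        16 * ((m : ℝ) - 1) * ((m : ℝ) + 1) ^ 2 / (m : ℝ)) * (t - 8 * ((m : ℝ) + 1)) := by
  intro n p q r
  have hm0 : (m : ℝ) ≠ 0 := Nat.cast_ne_zero.mpr (by omega)
  have hκ4 : κ ^ 4 = (4 * (m : ℝ)) ^ 2 := by rw [← hκ2]; ring
  apply cubic_eq_quadratic_mul_linear
  all_goals
    simp only [p, q, r, n, hκ4, hκ2]
    field_simp
    ring
end
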